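/- arXiv:1807.04857 — 3 statements merged into one kernel-verified Lean document; each statement's English description precedes it below -/
import Mathlib

section
/- If a Borel probability measure μ on ℝ^q satisfies lim_{ε→0} log μ(B_ε(x)) / log ε = c for μ-almost every x, then the Hausdorff dimension of μ, defined as inf{dim_H Z : μ(Z) = 1}, equals c. -/
open Set MeasureTheory Filter Topology

open Metric ENNReal

set_option linter.unusedSectionVars false
set_option maxHeartbeats 1000000

variable {X : Type*} [MetricSpace X] [MeasurableSpace X] [BorelSpace X]
  [SecondCountableTopology X]


lemma measurable_measure_ball' (μ : Measure X) (ε : ℝ) :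
    Measurable fun x => μ (Metric.ball x ε) := by
  rcases le_or_gt ε 0 with hε | hε
  · simp [Metric.ball_eq_empty.2 hε, measurable_const]
  · have lsc : LowerSemicontinuous fun x => μ (Metric.ball x ε) := by
      intro x b hb
      simp only at hb
      set s : ℕ → Set X := fun n => Metric.ball x (ε - ε / (n + 2)) with hs
      have hmono : Monotone s := by
        intro m n hmn
        apply Metric.ball_subset_ball
        have hc : (m:ℝ) + 2 ≤ (n:ℝ) + 2 := by
          have := (Nat.cast_le (α := ℝ)).2 hmn; linarith
        have : ε / (n + 2) ≤ ε / (m + 2) :=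
          div_le_div_of_nonneg_left hε.le (by positivity) hc
        linarith
      have hU : ⋃ n, s n = Metric.ball x ε := by
        apply Subset.antisymm
        · exact iUnion_subset fun n => Metric.ball_subset_ball (by
            have : 0 < ε / ((n:ℝ) + 2) := by positivity
            linarith)
        · intro y hy
          have hy' : dist y x < ε := Metric.mem_ball.1 hy
          obtain ⟨n, hn⟩ := exists_nat_gt (ε / (ε - dist y x))
          have hd : 0 < ε - dist y x := by linarith
          have : ε / ((n:ℝ) + 2) < ε - dist y x := by
            rw [div_lt_iff₀ (by positivity)]
            have h1 : ε < (ε - dist y x) * n := by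
              rw [div_lt_iff₀ hd] at hn; linarith
            nlinarith
          exact mem_iUnion.2 ⟨n, by simp only [s, Metric.mem_ball]; linarith⟩
      have hdir : Directed (· ⊆ ·) s := hmono.directed_le
      have hsup : μ (Metric.ball x ε) = ⨆ n, μ (s n) := by rw [← hU, hdir.measure_iUnion]
      rw [hsup] at hb
      obtain ⟨n, hn⟩ := lt_iSup_iff.1 hb
      have hb' : Metric.ball x (ε / (n + 2)) ∈ 𝓝 x := Metric.ball_mem_nhds _ (by positivity)
      filter_upwards [hb'] with y hy
      refine hn.trans_le (measure_mono fun z hz => ?_)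
      have h1 : dist z x < ε - ε / (n + 2) := Metric.mem_ball.1 hz
      have h2 : dist y x < ε / (n + 2) := Metric.mem_ball.1 hy
      rw [dist_comm] at h2
      rw [Metric.mem_ball]
      calc dist z y ≤ dist z x + dist x y := dist_triangle z x y
        _ < ε := by linarith
    exact lsc.measurable



lemma diam_cb_le {X : Type*} [MetricSpace X] (x : X) {r : ℝ} (hr : 0 ≤ r) :
    EMetric.diam (Metric.closedBall x r) ≤ ENNReal.ofReal (2 * r) := by
  rw [← Metric.emetric_closedBall hr]
  refine le_trans EMetric.diam_closedBall ?_
  rw [two_mul, ← ENNReal.ofReal_add hr hr, ← two_mul]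

lemma dimH_le_of_forall_ball_le (μ : Measure X) [IsProbabilityMeasure μ]
    {s δ0 : ℝ} (hs : 0 ≤ s) (hδ0 : 0 < δ0) (Z : Set X)
    (hZ : ∀ x ∈ Z, ∀ ρ : ℚ, 0 < (ρ:ℝ) → (ρ:ℝ) < δ0 →
      ENNReal.ofReal ((ρ:ℝ) ^ s) ≤ μ (Metric.ball x ρ)) :
    dimH Z ≤ ENNReal.ofReal s := by
  -- choose rational radii ρ n ∈ (0, min δ0 (1/(n+1)))
  have hchoice : ∀ n : ℕ, ∃ ρ : ℚ, 0 < (ρ:ℝ) ∧ (ρ:ℝ) < min δ0 (1/(n+1)) := by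
    intro n
    obtain ⟨ρ, h1, h2⟩ := exists_rat_btwn (show (0:ℝ) < min δ0 (1/(n+1)) by positivity)
    exact ⟨ρ, h1, h2⟩
  choose ρ hρpos hρlt using hchoice
  -- Vitali for each n
  have hvitali : ∀ n : ℕ, ∃ u : Set X, u ⊆ Z ∧ u.Countable ∧
      (u.PairwiseDisjoint fun a => Metric.closedBall a (ρ n)) ∧
      Z ⊆ ⋃ b ∈ u, Metric.closedBall b (4 * ρ n) := by
    intro n
    obtain ⟨u, huZ, hdisj, hcov⟩ :=
      Vitali.exists_disjoint_subfamily_covering_enlargement_closedBall Z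
        (id : X → X) (fun _ => (ρ n : ℝ)) (ρ n) (fun a _ => le_rfl) 4 (by norm_num)
    refine ⟨u, huZ, ?_, hdisj, ?_⟩
    · apply (hdisj.mono ?_).countable_of_nonempty_interior
      · intro b hb
        exact ⟨b, mem_interior_iff_mem_nhds.2 (Metric.closedBall_mem_nhds _ (hρpos n))⟩
      · exact fun a => le_rfl
    · intro a ha
      obtain ⟨b, hbu, hsub⟩ := hcov a ha
      exact mem_biUnion hbu (hsub (Metric.mem_closedBall_self (hρpos n).le))
  choose u huZ hucnt hudisj hucov using hvitali
  -- apply hausdorffMeasure_le_liminf_tsum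
  have key : μH[s] Z ≤ ENNReal.ofReal (8 ^ s) := by
    have := fun n => (hucnt n).to_subtype
    have hbound := Measure.hausdorffMeasure_le_liminf_tsum (ι := fun n => ↥(u n)) s Z
      (l := atTop) (fun n => ENNReal.ofReal (8 * ρ n))
      (by
        have h0 : Tendsto (fun n : ℕ => 8 * (ρ n : ℝ)) atTop (𝓝 0) := by
          apply squeeze_zero (fun n => by have := hρpos n; linarith)
            (fun n => ?_) (by simpa using (tendsto_one_div_add_atTop_nhds_zero_nat (𝕜 := ℝ)).const_mul 8)
          have := (hρlt n).trans_le (min_le_right _ _)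
          rw [one_div] at this
          linarith
        have := ENNReal.tendsto_ofReal h0
        rwa [ENNReal.ofReal_zero] at this)
      (fun n (b : u n) => Metric.closedBall (b : X) (4 * ρ n))
      (Eventually.of_forall fun n (b : u n) => by
        refine le_trans (diam_cb_le _ (by have := hρpos n; linarith)) (ENNReal.ofReal_le_ofReal (by linarith)))
      (Eventually.of_forall fun n => by
        intro a ha
        obtain ⟨b, hb, hmem⟩ := mem_iUnion₂.1 (hucov n ha)
        exact mem_iUnion.2 ⟨⟨b, hb⟩, hmem⟩)
    refine hbound.trans ?_
    have hterm : ∀ n : ℕ, (∑' b : u n, EMetric.diam (Metric.closedBall (b:X) (4 * ρ n)) ^ s)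
        ≤ ENNReal.ofReal (8 ^ s) := by
      intro n
      have h1 : ∀ b : u n, EMetric.diam (Metric.closedBall (b:X) (4 * ρ n)) ^ s
          ≤ ENNReal.ofReal ((8:ℝ) ^ s) * ENNReal.ofReal ((ρ n : ℝ) ^ s) := by
        intro b
        have hd : EMetric.diam (Metric.closedBall (b:X) (4 * ρ n)) ≤ ENNReal.ofReal (8 * ρ n) :=
          le_trans (diam_cb_le _ (by have := hρpos n; linarith)) (ENNReal.ofReal_le_ofReal (by linarith))
        calc EMetric.diam (Metric.closedBall (b:X) (4 * ρ n)) ^ s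
            ≤ ENNReal.ofReal (8 * ρ n) ^ s := by
              exact ENNReal.rpow_le_rpow hd hs
          _ = ENNReal.ofReal ((8 * ρ n) ^ s) := ENNReal.ofReal_rpow_of_pos (by have := hρpos n; linarith)
          _ = ENNReal.ofReal ((8:ℝ) ^ s * (ρ n:ℝ) ^ s) := by
              rw [Real.mul_rpow (by norm_num) (hρpos n).le]
          _ = ENNReal.ofReal ((8:ℝ) ^ s) * ENNReal.ofReal ((ρ n : ℝ) ^ s) := by
              rw [ENNReal.ofReal_mul (by positivity)]
      have h2 : (∑' b : u n, ENNReal.ofReal ((ρ n : ℝ) ^ s)) ≤ 1 := by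
        have h3 : ∀ b : u n, ENNReal.ofReal ((ρ n : ℝ) ^ s) ≤ μ (Metric.closedBall (b:X) (ρ n)) := by
          intro b
          refine le_trans (hZ (b:X) (huZ n b.2) (ρ n) (hρpos n)
            ((hρlt n).trans_le (min_le_left _ _))) ?_
          exact measure_mono Metric.ball_subset_closedBall
        calc (∑' b : u n, ENNReal.ofReal ((ρ n : ℝ) ^ s))
            ≤ ∑' b : u n, μ (Metric.closedBall (b:X) (ρ n)) := ENNReal.tsum_le_tsum h3
          _ = μ (⋃ b : u n, Metric.closedBall (b:X) (ρ n)) := by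
              rw [measure_iUnion ?_ (fun b => measurableSet_closedBall)]
              exact (hudisj n).subtype _ _
          _ ≤ μ univ := measure_mono (subset_univ _)
          _ = 1 := measure_univ
      calc (∑' b : u n, EMetric.diam (Metric.closedBall (b:X) (4 * ρ n)) ^ s)
          ≤ ∑' b : u n, ENNReal.ofReal ((8:ℝ) ^ s) * ENNReal.ofReal ((ρ n : ℝ) ^ s) :=
            ENNReal.tsum_le_tsum h1
        _ = ENNReal.ofReal ((8:ℝ) ^ s) * ∑' b : u n, ENNReal.ofReal ((ρ n : ℝ) ^ s) :=
            ENNReal.tsum_mul_left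
        _ ≤ ENNReal.ofReal ((8:ℝ) ^ s) * 1 := by gcongr
        _ = ENNReal.ofReal ((8:ℝ) ^ s) := mul_one _
    calc liminf (fun n => ∑' b : u n, EMetric.diam (Metric.closedBall (b:X) (4 * ρ n)) ^ s) atTop
        ≤ liminf (fun _ : ℕ => ENNReal.ofReal ((8:ℝ) ^ s)) atTop :=
          liminf_le_liminf (Eventually.of_forall hterm)
      _ = ENNReal.ofReal ((8:ℝ) ^ s) := liminf_const _
  -- conclude
  have : dimH Z ≤ (s.toNNReal : ℝ≥0∞) := by
    apply dimH_le_of_hausdorffMeasure_ne_top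
    rw [Real.coe_toNNReal s hs]
    exact (key.trans_lt ENNReal.ofReal_lt_top).ne
  rwa [ENNReal.ofReal]



lemma le_dimH_of_forall_ball_le (μ : Measure X) [IsProbabilityMeasure μ]
    {s δ0 : ℝ} (hs : 0 < s) (hδ0 : 0 < δ0) (W : Set X) (hW : μ W ≠ 0)
    (hball : ∀ x ∈ W, ∀ ρ : ℚ, 0 < (ρ:ℝ) → (ρ:ℝ) < δ0 →
      μ (Metric.ball x ρ) ≤ ENNReal.ofReal ((ρ:ℝ) ^ s)) :
    ENNReal.ofReal s ≤ dimH W := by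
  -- singletons in W are null
  have hsingleton : ∀ x ∈ W, μ {x} = 0 := by
    intro x hx
    have hρ : ∀ k : ℕ, ∃ ρ : ℚ, 0 < (ρ:ℝ) ∧ (ρ:ℝ) < min δ0 (1/(k+1)) := fun k =>
      exists_rat_btwn (show (0:ℝ) < min δ0 (1/(k+1)) by positivity)
    choose ρ hρpos hρlt using hρ
    have hlim : Tendsto (fun k : ℕ => ENNReal.ofReal ((ρ k : ℝ) ^ s)) atTop (𝓝 0) := by
      have h0 : Tendsto (fun k : ℕ => (ρ k : ℝ)) atTop (𝓝 0) := by
        apply squeeze_zero (fun k => (hρpos k).le) (fun k => ?_)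
          (by simpa using tendsto_one_div_add_atTop_nhds_zero_nat)
        simpa [one_div] using ((hρlt k).trans_le (min_le_right _ _)).le
      have h1 : Tendsto (fun k : ℕ => (ρ k : ℝ) ^ s) atTop (𝓝 0) := by
        have hcont := (Real.continuousAt_rpow_const 0 s (Or.inr hs.le)).tendsto
        have := hcont.comp h0
        simpa [Function.comp_def, Real.zero_rpow hs.ne'] using this
      have := ENNReal.tendsto_ofReal h1
      rwa [ENNReal.ofReal_zero] at this
    have hle : μ {x} ≤ 0 := ge_of_tendsto' hlim fun k => by
      refine le_trans (measure_mono ?_) (hball x hx (ρ k) (hρpos k)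
        ((hρlt k).trans_le (min_le_left _ _)))
      exact singleton_subset_iff.2 (Metric.mem_ball_self (hρpos k))
    exact le_antisymm hle zero_le
  set K := ENNReal.ofReal ((2:ℝ) ^ s) with hK
  have hK0 : K ≠ 0 := by
    simp only [hK, ne_eq, ENNReal.ofReal_eq_zero, not_le]
    positivity
  have hKtop : K ≠ ⊤ := ENNReal.ofReal_ne_top
  -- the Hausdorff measure is bounded below
  have hmain : K⁻¹ * μ W ≤ μH[s] W := by
    rw [Measure.hausdorffMeasure_apply]
    refine le_iSup₂_of_le (ENNReal.ofReal (δ0/4)) (by simp; positivity) ?_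
    refine le_iInf fun t => le_iInf fun hcov => le_iInf fun hdiam => ?_
    suffices hμ : μ W ≤ K * ∑' n, ⨆ _ : (t n).Nonempty, EMetric.diam (t n) ^ s by
      calc K⁻¹ * μ W ≤ K⁻¹ * (K * ∑' n, ⨆ _ : (t n).Nonempty, EMetric.diam (t n) ^ s) := by
            gcongr
        _ = ∑' n, ⨆ _ : (t n).Nonempty, EMetric.diam (t n) ^ s := by
            rw [← mul_assoc, ENNReal.inv_mul_cancel hK0 hKtop, one_mul]
    have step1 : μ W ≤ ∑' n, μ (t n ∩ W) := by
      refine le_trans (measure_mono fun x hx => ?_) (measure_iUnion_le _)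
      obtain ⟨n, hn⟩ := mem_iUnion.1 (hcov hx)
      exact mem_iUnion.2 ⟨n, hn, hx⟩
    refine step1.trans ?_
    rw [← ENNReal.tsum_mul_left]
    refine ENNReal.tsum_le_tsum fun n => ?_
    rcases (t n ∩ W).eq_empty_or_nonempty with hemp | ⟨x, hxt, hxW⟩
    · simp [hemp]
    have hne : (t n).Nonempty := ⟨x, hxt⟩
    rw [iSup_pos hne]
    rcases eq_or_ne (EMetric.diam (t n)) 0 with hd | hd
    · have hsub : (t n).Subsingleton := EMetric.diam_eq_zero_iff.1 hd
      have : t n ∩ W ⊆ {x} := fun y hy => hsub hy.1 hxt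
      calc μ (t n ∩ W) ≤ μ {x} := measure_mono this
        _ = 0 := hsingleton x hxW
        _ ≤ _ := zero_le
    · have hdtop : EMetric.diam (t n) ≠ ⊤ := ((hdiam n).trans_lt ENNReal.ofReal_lt_top).ne
      set ε := (EMetric.diam (t n)).toReal with hε
      have hε0 : 0 < ε := ENNReal.toReal_pos hd hdtop
      have hεle : ε ≤ δ0/4 := ENNReal.toReal_le_of_le_ofReal (by positivity) (hdiam n)
      obtain ⟨ρ, hρ1, hρ2⟩ := exists_rat_btwn (show ε < min δ0 (2*ε) from
        lt_min (by linarith) (by linarith))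
      have hρδ0 : (ρ:ℝ) < δ0 := hρ2.trans_le (min_le_left _ _)
      have hρ2ε : (ρ:ℝ) < 2*ε := hρ2.trans_le (min_le_right _ _)
      have hρpos : 0 < (ρ:ℝ) := hε0.trans hρ1
      have hsub : t n ∩ W ⊆ Metric.ball x ρ := by
        intro y hy
        have hed : edist y x ≤ EMetric.diam (t n) := EMetric.edist_le_diam_of_mem hy.1 hxt
        have hdy : dist y x ≤ ε := by
          rw [dist_edist]
          exact ENNReal.toReal_mono hdtop hed
        exact Metric.mem_ball.2 (hdy.trans_lt hρ1)
      have hdrw : EMetric.diam (t n) = ENNReal.ofReal ε := (ENNReal.ofReal_toReal hdtop).symm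
      calc μ (t n ∩ W) ≤ μ (Metric.ball x ρ) := measure_mono hsub
        _ ≤ ENNReal.ofReal ((ρ:ℝ) ^ s) := hball x hxW ρ hρpos hρδ0
        _ ≤ ENNReal.ofReal ((2*ε) ^ s) :=
            ENNReal.ofReal_le_ofReal (Real.rpow_le_rpow hρpos.le hρ2ε.le hs.le)
        _ = ENNReal.ofReal ((2:ℝ) ^ s * ε ^ s) := by
            rw [Real.mul_rpow (by norm_num) hε0.le]
        _ = K * ENNReal.ofReal (ε ^ s) := by
            rw [ENNReal.ofReal_mul (by positivity)]
        _ = K * EMetric.diam (t n) ^ s := by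
            rw [hdrw, ENNReal.ofReal_rpow_of_pos hε0]
  have hne : μH[s] W ≠ 0 := by
    intro h0
    rw [h0] at hmain
    exact (mul_ne_zero (ENNReal.inv_ne_zero.2 hKtop) hW) (le_antisymm hmain zero_le)
  have := le_dimH_of_hausdorffMeasure_ne_zero (s := W) (d := s.toNNReal)
    (by rw [Real.coe_toNNReal s hs.le]; exact hne)
  rwa [ENNReal.ofReal]


/-- Young's criterion: if the local dimension of `μ` equals `c` almost everywhere,
then the Hausdorff dimension of `μ` equals `c`. -/
theorem exact_dimensional_hausdorff (q : ℕ) (μ : Measure (Fin q → ℝ))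
    [IsProbabilityMeasure μ] (c : ℝ)
    (h : ∀ᵐ x ∂μ, Tendsto (fun ε : ℝ => Real.log (μ (Metric.ball x ε)).toReal / Real.log ε)
      (nhdsWithin 0 (Set.Ioi 0)) (nhds c)) :
    sInf {d : ENNReal | ∃ Z : Set (Fin q → ℝ), MeasurableSet Z ∧ μ Z = 1 ∧ dimH Z = d}
      = ENNReal.ofReal c := by
  have hne : (ae μ).NeBot := IsProbabilityMeasure.ae_neBot
  obtain ⟨x₀, hx₀⟩ := h.exists
  have hc0 : 0 ≤ c := by
    refine ge_of_tendsto hx₀ ?_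
    filter_upwards [Ioo_mem_nhdsGT (zero_lt_one)] with ε hε
    have h1 : Real.log ε < 0 := Real.log_neg hε.1 hε.2
    have h2 : Real.log (μ (Metric.ball x₀ ε)).toReal ≤ 0 :=
      Real.log_nonpos ENNReal.toReal_nonneg
        (ENNReal.toReal_le_of_le_ofReal zero_le_one (by simpa using prob_le_one))
    exact div_nonneg_of_nonpos h2 h1.le
  -- the good set where all balls have positive measure
  set G : Set (Fin q → ℝ) := ⋂ ρ : ℚ, {x | 0 < (ρ:ℝ) → 0 < μ (Metric.ball x ρ)} with hG
  have hGmeas : MeasurableSet G := by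
    refine MeasurableSet.iInter fun ρ => ?_
    by_cases hρ : 0 < (ρ:ℝ)
    · simp only [hρ, forall_true_left]
      exact measurable_measure_ball' μ _ measurableSet_Ioi
    · have : {x : Fin q → ℝ | 0 < (ρ:ℝ) → 0 < μ (Metric.ball x ρ)} = univ := by
        ext x; simp [hρ]
      rw [this]; exact MeasurableSet.univ
  have hGae : ∀ᵐ x ∂μ, x ∈ G := by
    rw [ae_iff]
    have : {x | ¬ x ∈ G} = Gᶜ := rfl
    rw [this]
    apply measure_null_of_locally_null
    intro x hx
    simp only [hG, compl_iInter, mem_iUnion, mem_compl_iff, mem_setOf_eq, not_forall] at hx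
    obtain ⟨ρ, hρpos, hρ0⟩ := hx
    refine ⟨Metric.ball x ρ, mem_nhdsWithin_of_mem_nhds (Metric.ball_mem_nhds _ hρpos), ?_⟩
    simpa [pos_iff_ne_zero] using hρ0
  apply le_antisymm
  · refine ENNReal.le_of_forall_pos_le_add fun ε hε _ => ?_
    set s : ℝ := c + (ε:ℝ) with hsdef
    have hεR : 0 < (ε:ℝ) := hε
    have hsc : c < s := by simp only [hsdef]; linarith
    have hs0 : 0 ≤ s := by linarith
    set A : ℕ → Set (Fin q → ℝ) := fun n => ⋂ ρ : ℚ,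
      {x | 0 < (ρ:ℝ) → (ρ:ℝ) < 1/(n+1) → ENNReal.ofReal ((ρ:ℝ) ^ s) ≤ μ (Metric.ball x ρ)}
      with hA
    have hAmeas : ∀ n, MeasurableSet (A n) := by
      intro n
      refine MeasurableSet.iInter fun ρ => ?_
      by_cases h1 : 0 < (ρ:ℝ)
      · by_cases h2 : (ρ:ℝ) < 1/(n+1)
        · simp only [h1, h2, forall_true_left]
          exact measurable_measure_ball' μ _ measurableSet_Ici
        · have : {x : Fin q → ℝ | 0 < (ρ:ℝ) → (ρ:ℝ) < 1/(n+1) →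
              ENNReal.ofReal ((ρ:ℝ) ^ s) ≤ μ (Metric.ball x ρ)} = univ := by
            ext x
            simp only [mem_setOf_eq, mem_univ, iff_true]
            intro _ hlt
            exact absurd hlt h2
          rw [this]; exact MeasurableSet.univ
      · have : {x : Fin q → ℝ | 0 < (ρ:ℝ) → (ρ:ℝ) < 1/(n+1) →
            ENNReal.ofReal ((ρ:ℝ) ^ s) ≤ μ (Metric.ball x ρ)} = univ := by
          ext x; simp [h1]
        rw [this]; exact MeasurableSet.univ
    have hae : ∀ᵐ x ∂μ, x ∈ ⋃ n, A n := by
      filter_upwards [h, hGae] with x hx hxG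
      have hev := hx.eventually_lt_const hsc
      obtain ⟨δ, hδmem, hδ⟩ := mem_nhdsGT_iff_exists_Ioo_subset.1 hev
      obtain ⟨n, hn⟩ := exists_nat_one_div_lt (show (0:ℝ) < min δ 1 from
        lt_min hδmem zero_lt_one)
      refine mem_iUnion.2 ⟨n, ?_⟩
      rw [hA]
      refine mem_iInter.2 fun ρ => ?_
      intro hρpos hρlt
      have hρδ : (ρ:ℝ) < δ := lt_of_lt_of_le (hρlt.trans hn) (min_le_left _ _)
      have hρ1 : (ρ:ℝ) < 1 := lt_of_lt_of_le (hρlt.trans hn) (min_le_right _ _)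
      have hratio : Real.log (μ (Metric.ball x ρ)).toReal / Real.log ρ < s :=
        hδ ⟨hρpos, hρδ⟩
      have hlogρ : Real.log ρ < 0 := Real.log_neg hρpos hρ1
      have hm0 : 0 < (μ (Metric.ball x ρ)).toReal :=
        ENNReal.toReal_pos (by
          have := mem_iInter.1 hxG ρ hρpos
          exact this.ne') (measure_ne_top μ _)
      have hlt : s * Real.log ρ < Real.log (μ (Metric.ball x ρ)).toReal :=
        (div_lt_iff_of_neg hlogρ).1 hratio
      have hrle : (ρ:ℝ) ^ s ≤ (μ (Metric.ball x ρ)).toReal := by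
        rw [Real.rpow_def_of_pos hρpos]
        calc Real.exp (Real.log ρ * s) = Real.exp (s * Real.log ρ) := by rw [mul_comm]
          _ ≤ Real.exp (Real.log (μ (Metric.ball x ρ)).toReal) := Real.exp_le_exp.2 hlt.le
          _ = (μ (Metric.ball x ρ)).toReal := Real.exp_log hm0
      calc ENNReal.ofReal ((ρ:ℝ) ^ s) ≤ ENNReal.ofReal (μ (Metric.ball x ρ)).toReal :=
            ENNReal.ofReal_le_ofReal hrle
        _ = μ (Metric.ball x ρ) := ENNReal.ofReal_toReal (measure_ne_top μ _)
    have hμZ : μ (⋃ n, A n) = 1 := by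
      rw [← prob_compl_eq_zero_iff (MeasurableSet.iUnion hAmeas)]
      rw [ae_iff] at hae
      exact hae
    have hdim : dimH (⋃ n, A n) ≤ ENNReal.ofReal s := by
      rw [dimH_iUnion]
      refine iSup_le fun n => ?_
      refine dimH_le_of_forall_ball_le μ hs0 (show (0:ℝ) < 1/(n+1) by positivity) _ ?_
      intro x hx ρ h1 h2
      exact mem_iInter.1 hx ρ h1 h2
    calc sInf {d : ENNReal | ∃ Z : Set (Fin q → ℝ), MeasurableSet Z ∧ μ Z = 1 ∧ dimH Z = d}
        ≤ dimH (⋃ n, A n) := sInf_le ⟨⋃ n, A n, MeasurableSet.iUnion hAmeas, hμZ, rfl⟩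
      _ ≤ ENNReal.ofReal s := hdim
      _ ≤ ENNReal.ofReal c + ε := by
          rw [hsdef, ENNReal.ofReal_add hc0 hεR.le, ENNReal.ofReal_coe_nnreal]
  · refine le_sInf fun d hd => ?_
    obtain ⟨Z, hZm, hZ1, rfl⟩ := hd
    rcases le_or_gt c 0 with hcneg | hcpos
    · simp [ENNReal.ofReal_eq_zero.2 hcneg]
    refine ENNReal.le_of_forall_pos_le_add fun ε hε _ => ?_
    have hεR : 0 < (ε:ℝ) := hε
    set s : ℝ := max (c - (ε:ℝ)/2) (c/2) with hsdef
    have hs0 : 0 < s := lt_of_lt_of_le (by linarith) (le_max_right _ _)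
    have hsc : s < c := max_lt (by linarith) (by linarith)
    have hcs : c ≤ s + (ε:ℝ) := by
      have := le_max_left (c - (ε:ℝ)/2) (c/2)
      linarith
    suffices hZdim : ENNReal.ofReal s ≤ dimH Z by
      calc ENNReal.ofReal c ≤ ENNReal.ofReal (s + (ε:ℝ)) := ENNReal.ofReal_le_ofReal hcs
        _ ≤ ENNReal.ofReal s + ENNReal.ofReal (ε:ℝ) := ENNReal.ofReal_add_le
        _ ≤ dimH Z + ε := by
            rw [ENNReal.ofReal_coe_nnreal]
            exact add_le_add_left hZdim _
    set B : ℕ → Set (Fin q → ℝ) := fun n => Z ∩ ⋂ ρ : ℚ,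
      {x | 0 < (ρ:ℝ) → (ρ:ℝ) < 1/(n+1) → μ (Metric.ball x ρ) ≤ ENNReal.ofReal ((ρ:ℝ) ^ s)}
      with hB
    have hBmeas : ∀ n, MeasurableSet (B n) := by
      intro n
      refine hZm.inter (MeasurableSet.iInter fun ρ => ?_)
      by_cases h1 : 0 < (ρ:ℝ)
      · by_cases h2 : (ρ:ℝ) < 1/(n+1)
        · simp only [h1, h2, forall_true_left]
          exact measurable_measure_ball' μ _ measurableSet_Iic
        · have : {x : Fin q → ℝ | 0 < (ρ:ℝ) → (ρ:ℝ) < 1/(n+1) →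
              μ (Metric.ball x ρ) ≤ ENNReal.ofReal ((ρ:ℝ) ^ s)} = univ := by
            ext x
            simp only [mem_setOf_eq, mem_univ, iff_true]
            intro _ hlt
            exact absurd hlt h2
          rw [this]; exact MeasurableSet.univ
      · have : {x : Fin q → ℝ | 0 < (ρ:ℝ) → (ρ:ℝ) < 1/(n+1) →
            μ (Metric.ball x ρ) ≤ ENNReal.ofReal ((ρ:ℝ) ^ s)} = univ := by
          ext x; simp [h1]
        rw [this]; exact MeasurableSet.univ
    have hZae : ∀ᵐ x ∂μ, x ∈ Z := by
      rw [ae_iff]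
      have : {x | ¬ x ∈ Z} = Zᶜ := rfl
      rw [this, prob_compl_eq_zero_iff hZm]
      exact hZ1
    have hae : ∀ᵐ x ∂μ, x ∈ ⋃ n, B n := by
      filter_upwards [h, hZae] with x hx hxZ
      have hev := hx.eventually_const_lt hsc
      obtain ⟨δ, hδmem, hδ⟩ := mem_nhdsGT_iff_exists_Ioo_subset.1 hev
      obtain ⟨n, hn⟩ := exists_nat_one_div_lt (show (0:ℝ) < min δ 1 from
        lt_min hδmem zero_lt_one)
      refine mem_iUnion.2 ⟨n, hxZ, ?_⟩
      refine mem_iInter.2 fun ρ => ?_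
      intro hρpos hρlt
      have hρδ : (ρ:ℝ) < δ := lt_of_lt_of_le (hρlt.trans hn) (min_le_left _ _)
      have hρ1 : (ρ:ℝ) < 1 := lt_of_lt_of_le (hρlt.trans hn) (min_le_right _ _)
      have hratio : s < Real.log (μ (Metric.ball x ρ)).toReal / Real.log ρ :=
        hδ ⟨hρpos, hρδ⟩
      have hlogρ : Real.log ρ < 0 := Real.log_neg hρpos hρ1
      rcases eq_or_ne (μ (Metric.ball x ρ)) 0 with hm0 | hm0
      · simp [hm0]
      have hmpos : 0 < (μ (Metric.ball x ρ)).toReal :=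
        ENNReal.toReal_pos hm0 (measure_ne_top μ _)
      have hlt : Real.log (μ (Metric.ball x ρ)).toReal < s * Real.log ρ :=
        (lt_div_iff_of_neg hlogρ).1 hratio
      have hrle : (μ (Metric.ball x ρ)).toReal ≤ (ρ:ℝ) ^ s := by
        rw [Real.rpow_def_of_pos hρpos, mul_comm]
        calc (μ (Metric.ball x ρ)).toReal
            = Real.exp (Real.log (μ (Metric.ball x ρ)).toReal) := (Real.exp_log hmpos).symm
          _ ≤ Real.exp (s * Real.log ρ) := Real.exp_le_exp.2 hlt.le
      calc μ (Metric.ball x ρ) = ENNReal.ofReal (μ (Metric.ball x ρ)).toReal :=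
            (ENNReal.ofReal_toReal (measure_ne_top μ _)).symm
        _ ≤ ENNReal.ofReal ((ρ:ℝ) ^ s) := ENNReal.ofReal_le_ofReal hrle
    have hμB : μ (⋃ n, B n) = 1 := by
      rw [← prob_compl_eq_zero_iff (MeasurableSet.iUnion hBmeas)]
      rw [ae_iff] at hae
      exact hae
    obtain ⟨n, hn0⟩ : ∃ n, μ (B n) ≠ 0 := by
      by_contra hall
      push_neg at hall
      have : μ (⋃ n, B n) = 0 :=
        le_antisymm (le_trans (measure_iUnion_le _) (by simp [hall])) zero_le
      rw [hμB] at this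
      exact one_ne_zero this
    have hBdim : ENNReal.ofReal s ≤ dimH (B n) := by
      refine le_dimH_of_forall_ball_le μ hs0 (show (0:ℝ) < 1/(n+1) by positivity) _ hn0 ?_
      intro x hx ρ h1 h2
      exact mem_iInter.1 hx.2 ρ h1 h2
    exact hBdim.trans (dimH_mono inter_subset_left)
end

section
/- Let T₁, T₂ be the affine maps T_i(y,z) = (β_i y + ε_i(1−β_i), τ_i z + ε_i(1−τ_i)) with ε₁ = 1, ε₂ = −1, on [−1,1]^2, and let Λ^s be the attractor of the IFS {T₁, T₂}. Then the closure of the intersection ∩_{n≥0} f_v^n(W) equals [−1,1] × Λ^s. -/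
open Set

/-- The closure of `⋂ f_v^n(W)` equals `[-1,1] × Λˢ`, where `Λˢ` is the attractor of the
IFS `{T₁, T₂}`. -/
theorem solenoid_attractor_product (β₁ β₂ τ₁ τ₂ : ℝ)
    (hβ₁ : β₁ ∈ Set.Ioo (0:ℝ) 1) (hβ₂ : β₂ ∈ Set.Ioo (0:ℝ) 1)
    (hτ₁ : τ₁ ∈ Set.Ioo (0:ℝ) 1) (hτ₂ : τ₂ ∈ Set.Ioo (0:ℝ) 1)
    (hτ : τ₁ + τ₂ < 1)
    (f : ℝ × ℝ × ℝ → ℝ × ℝ × ℝ)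
    (hf : ∀ p : ℝ × ℝ × ℝ, f p =
      if 0 ≤ p.1 then (2 * p.1 - 1, β₁ * p.2.1 + (1 - β₁), τ₁ * p.2.2 + (1 - τ₁))
      else (2 * p.1 + 1, β₂ * p.2.1 - (1 - β₂), τ₂ * p.2.2 - (1 - τ₂)))
    (Λs : Set (ℝ × ℝ))
    (hsub : Λs ⊆ Set.Icc (-1 : ℝ) 1 ×ˢ Set.Icc (-1 : ℝ) 1)
    (hne : Λs.Nonempty) (hcomp : IsCompact Λs)
    (hself : Λs = (fun p : ℝ × ℝ => (β₁ * p.1 + (1 - β₁), τ₁ * p.2 + (1 - τ₁))) '' Λs ∪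
                  (fun p : ℝ × ℝ => (β₂ * p.1 - (1 - β₂), τ₂ * p.2 - (1 - τ₂))) '' Λs) :
    closure (⋂ n : ℕ,
        f^[n] '' (Set.Icc (-1 : ℝ) 1 ×ˢ Set.Icc (-1 : ℝ) 1 ×ˢ Set.Icc (-1 : ℝ) 1))
      = Set.Icc (-1 : ℝ) 1 ×ˢ Λs := by
  obtain ⟨hβ₁0, hβ₁1⟩ := hβ₁
  obtain ⟨hβ₂0, hβ₂1⟩ := hβ₂
  obtain ⟨hτ₁0, hτ₁1⟩ := hτ₁
  obtain ⟨hτ₂0, hτ₂1⟩ := hτ₂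
  set W : Set (ℝ × ℝ × ℝ) :=
    Set.Icc (-1 : ℝ) 1 ×ˢ Set.Icc (-1 : ℝ) 1 ×ˢ Set.Icc (-1 : ℝ) 1 with hW
  set S : Set (ℝ × ℝ) := Set.Icc (-1 : ℝ) 1 ×ˢ Set.Icc (-1 : ℝ) 1 with hSdef
  set T₁ : ℝ × ℝ → ℝ × ℝ :=
    fun p : ℝ × ℝ => (β₁ * p.1 + (1 - β₁), τ₁ * p.2 + (1 - τ₁)) with hT₁
  set T₂ : ℝ × ℝ → ℝ × ℝ :=
    fun p : ℝ × ℝ => (β₂ * p.1 - (1 - β₂), τ₂ * p.2 - (1 - τ₂)) with hT₂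
  set G : Set (ℝ × ℝ) → Set (ℝ × ℝ) := fun A => T₁ '' A ∪ T₂ '' A with hG
  set r : ℝ := max (max β₁ β₂) (max τ₁ τ₂) with hr
  have hr0 : 0 < r := lt_of_lt_of_le hβ₁0 (le_trans (le_max_left _ _) (le_max_left _ _))
  have hr1 : r < 1 := by
    apply max_lt (max_lt hβ₁1 hβ₂1) (max_lt hτ₁1 hτ₂1)
  have hβ₁r : β₁ ≤ r := le_trans (le_max_left _ _) (le_max_left _ _)
  have hβ₂r : β₂ ≤ r := le_trans (le_max_right _ _) (le_max_left _ _)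
  have hτ₁r : τ₁ ≤ r := le_trans (le_max_left _ _) (le_max_right _ _)
  have hτ₂r : τ₂ ≤ r := le_trans (le_max_right _ _) (le_max_right _ _)
  -- forward direction: Ico × Λs ⊆ every iterate image
  have forward : ∀ n : ℕ, Set.Ico (-1:ℝ) 1 ×ˢ Λs ⊆ f^[n] '' W := by
    intro n
    induction n with
    | zero =>
      rintro ⟨x, p⟩ ⟨hx, hp⟩
      simp only [Function.iterate_zero, Set.image_id]
      exact ⟨⟨hx.1, hx.2.le⟩, hsub hp⟩
    | succ n ih =>
      rintro ⟨x, p⟩ ⟨hx, hp⟩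
      rw [Function.iterate_succ', Set.image_comp]
      rw [hself] at hp
      rcases hp with ⟨q, hq, rfl⟩ | ⟨q, hq, rfl⟩
      · refine ⟨((x + 1) / 2, q), ih ⟨⟨by simp at hx ⊢; linarith [hx.1], by simp at hx ⊢; linarith [hx.2]⟩, hq⟩, ?_⟩
        rw [hf]
        have h0 : (0:ℝ) ≤ (x + 1) / 2 := by simp at hx; linarith [hx.1]
        rw [if_pos h0]
        simp only [hT₁]
        refine Prod.ext ?_ rfl
        simp; ring
      · refine ⟨((x - 1) / 2, q), ih ⟨⟨by simp at hx ⊢; linarith [hx.1], by simp at hx ⊢; linarith [hx.2]⟩, hq⟩, ?_⟩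
        rw [hf]
        have h0 : ¬ (0:ℝ) ≤ (x - 1) / 2 := by simp at hx ⊢; linarith [hx.2]
        rw [if_neg h0]
        simp only [hT₂]
        refine Prod.ext ?_ rfl
        simp; ring
  -- containment of iterates in product with IFS iterates
  have bound : ∀ n : ℕ, f^[n] '' W ⊆ Set.Icc (-1:ℝ) 1 ×ˢ G^[n] S := by
    intro n
    induction n with
    | zero =>
      simp only [Function.iterate_zero, Set.image_id, Set.image_id', id]
      intro p hp
      exact hp
    | succ n ih =>
      rw [Function.iterate_succ' f, Set.image_comp, Function.iterate_succ' G]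
      rintro _ ⟨w, hw, rfl⟩
      obtain ⟨hw1, hw2⟩ := ih hw
      simp only [Set.mem_Icc] at hw1
      rw [hf]
      by_cases h0 : (0:ℝ) ≤ w.1
      · rw [if_pos h0]
        refine ⟨Set.mem_Icc.2 ⟨show (-1:ℝ) ≤ 2 * w.1 - 1 by linarith [hw1.1],
          show (2 * w.1 - 1 : ℝ) ≤ 1 by linarith [hw1.2]⟩, ?_⟩
        exact Or.inl ⟨w.2, hw2, rfl⟩
      · rw [if_neg h0]
        push_neg at h0
        refine ⟨Set.mem_Icc.2 ⟨show (-1:ℝ) ≤ 2 * w.1 + 1 by linarith [hw1.1],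
          show (2 * w.1 + 1 : ℝ) ≤ 1 by linarith⟩, ?_⟩
        exact Or.inr ⟨w.2, hw2, rfl⟩
  -- distance bound: points of G^[n] S are 2*r^n-close to Λs
  have dist_bound : ∀ n : ℕ, ∀ p ∈ G^[n] S, ∃ a ∈ Λs, dist p a ≤ 2 * r ^ n := by
    intro n
    induction n with
    | zero =>
      intro p hp
      obtain ⟨a, ha⟩ := hne
      refine ⟨a, ha, ?_⟩
      obtain ⟨ha1, ha2⟩ := hsub ha
      simp only [Function.iterate_zero, id] at hp
      obtain ⟨hp1, hp2⟩ := hp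
      simp only [Set.mem_Icc] at ha1 ha2 hp1 hp2
      rw [Prod.dist_eq]
      simp only [pow_zero, mul_one]
      refine max_le ?_ ?_ <;> rw [Real.dist_eq, abs_le] <;> constructor <;> linarith
    | succ n ih =>
      intro p hp
      rw [Function.iterate_succ' G] at hp
      rcases hp with ⟨q, hq, rfl⟩ | ⟨q, hq, rfl⟩
      · obtain ⟨a, haΛ, hd⟩ := ih q hq
        refine ⟨T₁ a, by rw [hself]; exact Or.inl ⟨a, haΛ, rfl⟩, ?_⟩
        have h1 : dist (T₁ q) (T₁ a) ≤ r * dist q a := by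
          rw [Prod.dist_eq, Prod.dist_eq]
          simp only [hT₁, Real.dist_eq]
          have e1 : β₁ * q.1 + (1 - β₁) - (β₁ * a.1 + (1 - β₁)) = β₁ * (q.1 - a.1) := by ring
          have e2 : τ₁ * q.2 + (1 - τ₁) - (τ₁ * a.2 + (1 - τ₁)) = τ₁ * (q.2 - a.2) := by ring
          refine max_le ?_ ?_
          · rw [e1, abs_mul, abs_of_pos hβ₁0]
            calc β₁ * |q.1 - a.1| ≤ r * |q.1 - a.1| :=
                  mul_le_mul_of_nonneg_right hβ₁r (abs_nonneg _)
              _ ≤ r * max |q.1 - a.1| |q.2 - a.2| :=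
                  mul_le_mul_of_nonneg_left (le_max_left _ _) hr0.le
          · rw [e2, abs_mul, abs_of_pos hτ₁0]
            calc τ₁ * |q.2 - a.2| ≤ r * |q.2 - a.2| :=
                  mul_le_mul_of_nonneg_right hτ₁r (abs_nonneg _)
              _ ≤ r * max |q.1 - a.1| |q.2 - a.2| :=
                  mul_le_mul_of_nonneg_left (le_max_right _ _) hr0.le
        calc dist (T₁ q) (T₁ a) ≤ r * dist q a := h1
          _ ≤ r * (2 * r ^ n) := mul_le_mul_of_nonneg_left hd hr0.le
          _ = 2 * r ^ (n + 1) := by ring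
      · obtain ⟨a, haΛ, hd⟩ := ih q hq
        refine ⟨T₂ a, by rw [hself]; exact Or.inr ⟨a, haΛ, rfl⟩, ?_⟩
        have h1 : dist (T₂ q) (T₂ a) ≤ r * dist q a := by
          rw [Prod.dist_eq, Prod.dist_eq]
          simp only [hT₂, Real.dist_eq]
          have e1 : β₂ * q.1 - (1 - β₂) - (β₂ * a.1 - (1 - β₂)) = β₂ * (q.1 - a.1) := by ring
          have e2 : τ₂ * q.2 - (1 - τ₂) - (τ₂ * a.2 - (1 - τ₂)) = τ₂ * (q.2 - a.2) := by ring
          refine max_le ?_ ?_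
          · rw [e1, abs_mul, abs_of_pos hβ₂0]
            calc β₂ * |q.1 - a.1| ≤ r * |q.1 - a.1| :=
                  mul_le_mul_of_nonneg_right hβ₂r (abs_nonneg _)
              _ ≤ r * max |q.1 - a.1| |q.2 - a.2| :=
                  mul_le_mul_of_nonneg_left (le_max_left _ _) hr0.le
          · rw [e2, abs_mul, abs_of_pos hτ₂0]
            calc τ₂ * |q.2 - a.2| ≤ r * |q.2 - a.2| :=
                  mul_le_mul_of_nonneg_right hτ₂r (abs_nonneg _)
              _ ≤ r * max |q.1 - a.1| |q.2 - a.2| :=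
                  mul_le_mul_of_nonneg_left (le_max_right _ _) hr0.le
        calc dist (T₂ q) (T₂ a) ≤ r * dist q a := h1
          _ ≤ r * (2 * r ^ n) := mul_le_mul_of_nonneg_left hd hr0.le
          _ = 2 * r ^ (n + 1) := by ring
  -- the intersection is contained in Icc × Λs
  have inter_sub : (⋂ n : ℕ, f^[n] '' W) ⊆ Set.Icc (-1:ℝ) 1 ×ˢ Λs := by
    rintro ⟨x, p⟩ hmem
    have hn : ∀ n : ℕ, (x, p) ∈ Set.Icc (-1:ℝ) 1 ×ˢ G^[n] S :=
      fun n => bound n (Set.mem_iInter.1 hmem n)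
    refine ⟨(hn 0).1, ?_⟩
    have hinf : Metric.infDist p Λs = 0 := by
      have hle : ∀ n : ℕ, Metric.infDist p Λs ≤ 2 * r ^ n := by
        intro n
        obtain ⟨a, haΛ, hd⟩ := dist_bound n p (hn n).2
        exact le_trans (Metric.infDist_le_dist_of_mem haΛ) hd
      have htend : Filter.Tendsto (fun n : ℕ => 2 * r ^ n) Filter.atTop (nhds 0) := by
        have := tendsto_pow_atTop_nhds_zero_of_lt_one hr0.le hr1
        simpa using this.const_mul 2
      have : Metric.infDist p Λs ≤ 0 := ge_of_tendsto' htend hle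
      exact le_antisymm this (Metric.infDist_nonneg)
    exact (hcomp.isClosed.mem_iff_infDist_zero hne).2 hinf
  -- conclude
  apply Set.Subset.antisymm
  · exact closure_minimal inter_sub (isClosed_Icc.prod hcomp.isClosed)
  · have h1 : Set.Icc (-1:ℝ) 1 ×ˢ Λs = closure (Set.Ico (-1:ℝ) 1 ×ˢ Λs) := by
      rw [closure_prod_eq, closure_Ico (by norm_num : (-1:ℝ) ≠ 1),
        hcomp.isClosed.closure_eq]
    rw [h1]
    exact closure_mono (Set.subset_iInter forward)
end

section
/- If β₁ ≠ β₂ with β₁, β₂ ∈ (0,1) and β₁ + β₂ < 1, and d is the unique solution of β₁^d + β₂^d = 1, then log 2 / (−((1/2) log β₁ + (1/2) log β₂)) < d. -/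
open Set

/-- If `β₁ ≠ β₂` and `β₁^d + β₂^d = 1`, the dimension of the symmetric Bernoulli
measure is strictly smaller than `d`. -/
theorem symmetric_bernoulli_dim_lt (β₁ β₂ d : ℝ)
    (hβ₁ : β₁ ∈ Set.Ioo (0:ℝ) 1) (hβ₂ : β₂ ∈ Set.Ioo (0:ℝ) 1)
    (hne : β₁ ≠ β₂) (hsum : β₁ + β₂ < 1)
    (hd : 0 < d) (hdeq : β₁ ^ d + β₂ ^ d = 1) :
    Real.log 2 / (-((1 / 2) * Real.log β₁ + (1 / 2) * Real.log β₂)) < d := by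
  obtain ⟨h1, h1'⟩ := hβ₁
  obtain ⟨h2, h2'⟩ := hβ₂
  set p := β₁ ^ d with hp
  set q := β₂ ^ d with hq
  have hp0 : 0 < p := Real.rpow_pos_of_pos h1 d
  have hq0 : 0 < q := Real.rpow_pos_of_pos h2 d
  have hpq : p ≠ q := by
    rcases hne.lt_or_gt with h | h
    · exact ne_of_lt (Real.rpow_lt_rpow h1.le h hd)
    · exact (ne_of_lt (Real.rpow_lt_rpow h2.le h hd)).symm
  -- strict concavity of log
  have hconc := strictConcaveOn_log_Ioi.2 (Set.mem_Ioi.2 hp0) (Set.mem_Ioi.2 hq0) hpq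
    (by norm_num : (0:ℝ) < 1/2) (by norm_num : (0:ℝ) < 1/2) (by norm_num)
  have hmid : (1/2 : ℝ) * p + (1/2) * q = 1/2 := by
    have := hdeq
    simp only [smul_eq_mul] at *
    linarith [hdeq]
  simp only [smul_eq_mul] at hconc; rw [hmid] at hconc
  have hlogp : Real.log p = d * Real.log β₁ := Real.log_rpow h1 d
  have hlogq : Real.log q = d * Real.log β₂ := Real.log_rpow h2 d
  have hlhalf : Real.log (1/2) = -Real.log 2 := by
    rw [one_div, Real.log_inv]
  rw [hlhalf, hlogp, hlogq] at hconc
  have hL1 : Real.log β₁ < 0 := Real.log_neg h1 h1'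
  have hL2 : Real.log β₂ < 0 := Real.log_neg h2 h2'
  have hLpos : 0 < -((1 / 2) * Real.log β₁ + (1 / 2) * Real.log β₂) := by nlinarith
  rw [div_lt_iff₀ hLpos]
  nlinarith
end
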